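/- (Theorem modThetaLM, splitting identity) For all λ₀ ∈ L*, τ ∈ ℍ and ζ ∈ V_ℂ one has θ_{λ₀+L}(τ, ζ; v) = Σ_{δ ∈ D_M} θ^M_δ(τ, ζ_{M_ℂ}; u) · Θ_{L,M; λ₀+L, δ}(τ, ζ_{M_ℂ^⊥}; u^⊥), where θ^M_δ denotes the Jacobi–Siegel theta component of the lattice M in (M_ℝ, B) with respect to u. -/

import Mathlib

/-!
Common setup: Jacobi--Siegel theta functions of an even lattice `L` of indefinite
signature, with respect to a Grassmannian element `v = (v₊, v₋)`.

We model the real quadratic space `V` concretely as `ι → ℝ` (`ι` finite), its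
complexification `V_ℂ` as `ι → ℂ`, the bilinear form `B` as a plain function
(with bilinearity imposed as a hypothesis), the lattice `L` as a `ℤ`-submodule,
and the projections onto `v₊` and `v₋` as plain functions (with the projection
properties imposed as hypotheses).
-/

noncomputable section

namespace JacobiIndef

/-- `e(w) = exp(2 π i w)`. -/
def eC (w : ℂ) : ℂ := Complex.exp (2 * (Real.pi : ℂ) * Complex.I * w)

variable {ι : Type*} [Fintype ι]

/-- Inclusion of real vectors into the complexification. -/
def cV (x : ι → ℝ) : ι → ℂ := fun i => (x i : ℂ)

/-- Real part of a complex vector. -/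
def reV (z : ι → ℂ) : ι → ℝ := fun i => (z i).re

/-- Imaginary part of a complex vector. -/
def imV (z : ι → ℂ) : ι → ℝ := fun i => (z i).im

/-- The ℂ-linear extension of a real map `p`, acting on complex vectors. -/
def mapC (p : (ι → ℝ) → (ι → ℝ)) (z : ι → ℂ) : ι → ℂ :=
  cV (p (reV z)) + Complex.I • cV (p (imV z))

/-- `B(x, ζ)` for a real vector `x` and a complex vector `ζ` (ℂ-linear in `ζ`). -/
def pairC (B : (ι → ℝ) → (ι → ℝ) → ℝ) (x : ι → ℝ) (z : ι → ℂ) : ℂ :=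
  (B x (reV z) : ℂ) + Complex.I * (B x (imV z) : ℂ)

/-- The ℂ-bilinear extension of `B` to complex vectors. -/
def pairCC (B : (ι → ℝ) → (ι → ℝ) → ℝ) (z w : ι → ℂ) : ℂ :=
  ((B (reV z) (reV w) - B (imV z) (imV w) : ℝ) : ℂ)
    + Complex.I * ((B (reV z) (imV w) + B (imV z) (reV w) : ℝ) : ℂ)

/-- `B` is a symmetric bilinear form on `ι → ℝ`. -/
def IsSymmBilin (B : (ι → ℝ) → (ι → ℝ) → ℝ) : Prop :=
  (∀ x y z, B (x + y) z = B x z + B y z) ∧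
  (∀ (c : ℝ) (x y), B (c • x) y = c * B x y) ∧
  (∀ x y, B x y = B y x)

/-- `B` is nondegenerate. -/
def Nondeg (B : (ι → ℝ) → (ι → ℝ) → ℝ) : Prop :=
  ∀ x, (∀ y, B x y = 0) → x = 0

/-- `pp`, `pm` are the projections of a Grassmannian element: an orthogonal
decomposition `V = v₊ ⊕ v₋` with `B` positive definite on `v₊ = range pp` and
negative definite on `v₋ = range pm`. -/
def IsGrass (B : (ι → ℝ) → (ι → ℝ) → ℝ) (pp pm : (ι → ℝ) → (ι → ℝ)) : Prop :=
  (∀ x y, pp (x + y) = pp x + pp y) ∧ (∀ (c : ℝ) (x), pp (c • x) = c • pp x) ∧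
  (∀ x y, pm (x + y) = pm x + pm y) ∧ (∀ (c : ℝ) (x), pm (c • x) = c • pm x) ∧
  (∀ x, pp x + pm x = x) ∧ (∀ x, pp (pp x) = pp x) ∧ (∀ x, pm (pm x) = pm x) ∧
  (∀ x y, B (pp x) (pm y) = 0) ∧
  (∀ x, pp x ≠ 0 → 0 < B (pp x) (pp x)) ∧
  (∀ x, pm x ≠ 0 → B (pm x) (pm x) < 0)

/-- `L` is a full lattice: the ℤ-span of an ℝ-basis of `V`. -/
def IsFullLattice (L : Submodule ℤ (ι → ℝ)) : Prop :=
  ∃ b : Module.Basis ι ℝ (ι → ℝ), L = Submodule.span ℤ (Set.range ⇑b)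

/-- `L` is even with respect to `B`: integral pairings and even norms. -/
def IsEvenLat (B : (ι → ℝ) → (ι → ℝ) → ℝ) (L : Submodule ℤ (ι → ℝ)) : Prop :=
  (∀ x ∈ L, ∀ y ∈ L, ∃ n : ℤ, B x y = (n : ℝ)) ∧
  (∀ x ∈ L, ∃ n : ℤ, B x x = 2 * (n : ℝ))

/-- The dual lattice `L* = {x | B(x, L) ⊆ ℤ}`, as a set. -/
def dualSet (B : (ι → ℝ) → (ι → ℝ) → ℝ) (L : Submodule ℤ (ι → ℝ)) : Set (ι → ℝ) :=
  {x | ∀ m ∈ L, ∃ n : ℤ, B x m = (n : ℝ)}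

/-- The equivalence relation "congruent modulo `L`" on a set `S` of vectors. -/
def cosetSetoid (L : Submodule ℤ (ι → ℝ)) (S : Set (ι → ℝ)) : Setoid S where
  r x y := (x : ι → ℝ) - (y : ι → ℝ) ∈ L
  iseqv := by
    refine ⟨fun x => by simp, fun {x y} h => ?_, fun {x y z} h1 h2 => ?_⟩
    · have := L.neg_mem h
      simpa [neg_sub] using this
    · have := L.add_mem h1 h2
      rwa [sub_add_sub_cancel] at this

/-- The set of cosets of `L` in `S` (e.g. `D_L = L*/L`). -/
def DiscT (L : Submodule ℤ (ι → ℝ)) (S : Set (ι → ℝ)) : Type _ :=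
  Quotient (cosetSetoid L S)

/-- The discriminant group `D_L = L*/L` (as a type of cosets). -/
def Disc (B : (ι → ℝ) → (ι → ℝ) → ℝ) (L : Submodule ℤ (ι → ℝ)) : Type _ :=
  DiscT L (dualSet B L)

/-- A representative of a coset. -/
def qRep {L : Submodule ℤ (ι → ℝ)} {S : Set (ι → ℝ)} (q : DiscT L S) : ι → ℝ :=
  (Quotient.out (s := cosetSetoid L S) q).1

/-- The class of an element in a coset space. -/
def mkD {L : Submodule ℤ (ι → ℝ)} {S : Set (ι → ℝ)} (x : ι → ℝ) (hx : x ∈ S) :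
    DiscT L S :=
  Quotient.mk (cosetSetoid L S) ⟨x, hx⟩

/-- The Jacobi--Siegel theta component
`θ_{λ₀+L}(τ, ζ; v) = Σ_{λ ∈ λ₀+L} e(τ λ_{v₊}²/2 + τ̄ λ_{v₋}²/2 + B(λ, ζ))`. -/
def theta (B : (ι → ℝ) → (ι → ℝ) → ℝ) (pp pm : (ι → ℝ) → (ι → ℝ))
    (L : Submodule ℤ (ι → ℝ)) (lam0 : ι → ℝ) (τ : ℂ) (ζ : ι → ℂ) : ℂ :=
  ∑' μ : L, eC (τ * (B (pp (lam0 + (μ : ι → ℝ))) (pp (lam0 + (μ : ι → ℝ))) : ℂ) / 2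
    + (starRingEnd ℂ) τ * (B (pm (lam0 + (μ : ι → ℝ))) (pm (lam0 + (μ : ι → ℝ))) : ℂ) / 2
    + pairC B (lam0 + (μ : ι → ℝ)) ζ)

/-- The Jacobi--Siegel theta component with characteristics `(α, β)`. -/
def thetaChar (B : (ι → ℝ) → (ι → ℝ) → ℝ) (pp pm : (ι → ℝ) → (ι → ℝ))
    (L : Submodule ℤ (ι → ℝ)) (lam0 α β : ι → ℝ) (τ : ℂ) (ζ : ι → ℂ) : ℂ :=
  ∑' μ : L,
    eC (τ * (B (pp (lam0 + (μ : ι → ℝ) + β)) (pp (lam0 + (μ : ι → ℝ) + β)) : ℂ) / 2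
      + (starRingEnd ℂ) τ
          * (B (pm (lam0 + (μ : ι → ℝ) + β)) (pm (lam0 + (μ : ι → ℝ) + β)) : ℂ) / 2
      + pairC B (lam0 + (μ : ι → ℝ) + β) ζ
      - (B (lam0 + (μ : ι → ℝ) + (2⁻¹ : ℝ) • β) α : ℂ))

/-- The normalized theta with characteristics `θ̂ = e(-B(α,β)/2)·θ(·;(α,β);·)`. -/
def thetaHat (B : (ι → ℝ) → (ι → ℝ) → ℝ) (pp pm : (ι → ℝ) → (ι → ℝ))
    (L : Submodule ℤ (ι → ℝ)) (lam0 α β : ι → ℝ) (τ : ℂ) (ζ : ι → ℂ) : ℂ :=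
  eC (-(B α β : ℂ) / 2) * thetaChar B pp pm L lam0 α β τ ζ

/-- The elliptic functional equation for index `(L, v)`. -/
def SatElliptic (B : (ι → ℝ) → (ι → ℝ) → ℝ) (pp pm : (ι → ℝ) → (ι → ℝ))
    (L : Submodule ℤ (ι → ℝ)) (Φ : ℂ → (ι → ℂ) → ℂ) : Prop :=
  ∀ τ : ℂ, 0 < τ.im → ∀ ζ : ι → ℂ, ∀ σ ∈ L, ∀ ν ∈ L,
    Φ τ (ζ + τ • cV (pp σ) + (starRingEnd ℂ) τ • cV (pm σ) + cV ν)
      = eC (-(τ * (B (pp σ) (pp σ) : ℂ) / 2)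
            - (starRingEnd ℂ) τ * (B (pm σ) (pm σ) : ℂ) / 2
            - pairC B σ ζ) * Φ τ ζ

/-- The modular functional equation of (doubled) weight `(k2/2, l2/2)` for a matrix
`A = [[a,b],[c,d]]` with chosen square root `φ` of `j(A, ·)`, and index `(L, v)`. -/
def SatModular (B : (ι → ℝ) → (ι → ℝ) → ℝ) (pp pm : (ι → ℝ) → (ι → ℝ))
    (k2 l2 : ℤ) (a b c d : ℤ) (φ : ℂ → ℂ) (Φ : ℂ → (ι → ℂ) → ℂ) : Prop :=
  ∀ τ : ℂ, 0 < τ.im → ∀ ζ : ι → ℂ,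
    Φ (((a : ℂ) * τ + (b : ℂ)) / ((c : ℂ) * τ + (d : ℂ)))
      (((c : ℂ) * τ + (d : ℂ))⁻¹ • mapC pp ζ
        + ((starRingEnd ℂ) ((c : ℂ) * τ + (d : ℂ)))⁻¹ • mapC pm ζ)
      = φ τ ^ k2 * (starRingEnd ℂ) (φ τ) ^ l2
        * eC ((c : ℂ) * pairCC B (mapC pp ζ) (mapC pp ζ)
                / (2 * ((c : ℂ) * τ + (d : ℂ)))
              + (c : ℂ) * pairCC B (mapC pm ζ) (mapC pm ζ)
                / (2 * (starRingEnd ℂ) ((c : ℂ) * τ + (d : ℂ))))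
        * Φ τ ζ

/-- Complex directional derivative in the `ζ` variable, in the direction of a real
vector `w`. -/
def dirDeriv (w : ι → ℝ) (f : (ι → ℂ) → ℂ) (ζ : ι → ℂ) : ℂ :=
  deriv (fun z : ℂ => f (ζ + z • cV w)) 0

/-- The holomorphic Laplacian `Δ^h` attached to a basis `ws` with `B`-dual basis
`wds`. -/
def lapl {n : ℕ} (ws wds : Fin n → (ι → ℝ)) (f : (ι → ℂ) → ℂ) (ζ : ι → ℂ) : ℂ :=
  ∑ i : Fin n, dirDeriv (ws i) (fun ζ' => dirDeriv (wds i) f ζ') ζ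

/-- The Wirtinger derivative `∂_τ = (∂_x - i ∂_y)/2`. -/
def wirtD (g : ℂ → ℂ) (τ : ℂ) : ℂ :=
  (fderiv ℝ g τ 1 - Complex.I * fderiv ℝ g τ Complex.I) / 2

/-- The Wirtinger derivative `∂_{τ̄} = (∂_x + i ∂_y)/2`. -/
def wirtDBar (g : ℂ → ℂ) (τ : ℂ) : ℂ :=
  (fderiv ℝ g τ 1 + Complex.I * fderiv ℝ g τ Complex.I) / 2

/-- `ws`, `wds` form a basis of the subspace `range p` together with its `B`-dual
basis. -/
def IsDualBasisOf (B : (ι → ℝ) → (ι → ℝ) → ℝ) (p : (ι → ℝ) → (ι → ℝ))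
    {n : ℕ} (ws wds : Fin n → (ι → ℝ)) : Prop :=
  (∀ i, p (ws i) = ws i) ∧ (∀ i, p (wds i) = wds i) ∧
  LinearIndependent ℝ ws ∧
  Submodule.span ℝ (Set.range ws) = Submodule.span ℝ (Set.range p) ∧
  (∀ i j, B (ws i) (wds j) = if i = j then (1 : ℝ) else 0)

/-!
Write each `λ ∈ λ₀ + L` as `λ = r + m` with `r` a representative of the `M`-coset `q ∈ L*/M`
of `λ` and `m ∈ M`. Since `v` is adapted to `V = M_ℝ ⊕ M_ℝ^⊥`, the summand
`e(τ λ_{v₊}²/2 + τ̄ λ_{v₋}²/2 + B(λ, ζ))` factors into an `M_ℝ`-part and an `M_ℝ^⊥`-part. The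
latter depends only on `q`, and summing the former over `m ∈ M` gives `θ^M` at the class
`π_M(q) ∈ D_M`. Grouping the cosets `q` by `π_M(q)` produces `Θ_{L,M}`. The rearrangements are
justified by absolute convergence, which comes from the majorant `λ_{v₊}² - λ_{v₋}²` being
positive definite.
-/

theorem exists_pos_mul_norm_sq_le {E : Type*} [NormedAddCommGroup E] [NormedSpace ℝ E]
    [FiniteDimensional ℝ E] {N : E → ℝ} (hcont : Continuous N) (hpos : ∀ x ≠ 0, 0 < N x)
    (hhom : ∀ (t : ℝ) x, N (t • x) = t ^ 2 * N x) :
    ∃ c > 0, ∀ x, c * ‖x‖ ^ 2 ≤ N x := by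
  rcases subsingleton_or_nontrivial E with hE | hE
  · refine ⟨1, one_pos, fun x => ?_⟩
    simpa [Subsingleton.elim x 0] using (hhom 0 0).ge
  obtain ⟨z, hz, hmin⟩ := (isCompact_sphere (0 : E) 1).exists_isMinOn
    (NormedSpace.sphere_nonempty.2 zero_le_one) hcont.continuousOn
  have hz1 : ‖z‖ = 1 := mem_sphere_zero_iff_norm.1 hz
  refine ⟨N z, hpos z (norm_ne_zero_iff.1 (by simp [hz1])), fun x => ?_⟩
  rcases eq_or_ne x 0 with rfl | hx
  · simpa using (hhom 0 0).ge
  have hxn : ‖x‖ ≠ 0 := norm_ne_zero_iff.2 hx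
  have hle : N z ≤ N (‖x‖⁻¹ • x) := hmin (by simp [norm_smul, hxn])
  calc N z * ‖x‖ ^ 2 ≤ N (‖x‖⁻¹ • x) * ‖x‖ ^ 2 := by gcongr
    _ = N x := by rw [hhom]; field_simp

open Filter in
theorem summable_exp_neg_sq_add_lattice {E : Type*} [NormedAddCommGroup E] [NormedSpace ℝ E]
    [FiniteDimensional ℝ E] (L : Submodule ℤ E) [DiscreteTopology L] {a : ℝ} (ha : 0 < a)
    (C : ℝ) (x₀ : E) :
    Summable fun μ : L => Real.exp (-a * ‖x₀ + μ‖ ^ 2 + C * ‖x₀ + μ‖) := by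
  set r : ℝ := -(Module.finrank ℤ L + 1)
  have hr : r < -Module.finrank ℤ L := by simp [r]
  have hclosed : IsClosed (L : Set E) :=
    AddSubgroup.isClosed_of_discrete (H := L.toAddSubgroup)
  have htendsto : Tendsto (fun μ : L => x₀ + (μ : E)) cofinite (cocompact E) :=
    (Homeomorph.addLeft x₀).isClosedEmbedding.tendsto_cocompact.comp
      (hclosed.tendsto_coe_cofinite_of_isDiscrete (isDiscrete_iff_discreteTopology.2 ‹_›))
  have hdecay := ((rexp_neg_quadratic_isLittleO_rpow_atTop (neg_lt_zero.2 ha) C r).comp_tendsto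
    tendsto_norm_cocompact_atTop).comp_tendsto htendsto
  refine summable_of_isBigO ?_ hdecay.isBigO
  simpa [Function.comp_def, sub_neg_eq_add, add_comm] using
    ZLattice.summable_norm_sub_rpow L r hr (-x₀)

section Majorant

variable {B : (ι → ℝ) → (ι → ℝ) → ℝ} {pp pm : (ι → ℝ) → (ι → ℝ)}

theorem IsSymmBilin.add_right (hB : IsSymmBilin B) (x y z : ι → ℝ) :
    B x (y + z) = B x y + B x z := by
  rw [hB.2.2, hB.1, hB.2.2 y, hB.2.2 z]

theorem IsSymmBilin.smul_right (hB : IsSymmBilin B) (c : ℝ) (x y : ι → ℝ) :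
    B x (c • y) = c * B x y := by
  rw [hB.2.2, hB.2.1, hB.2.2 y]

def IsSymmBilin.toBilin (hB : IsSymmBilin B) : (ι → ℝ) →ₗ[ℝ] (ι → ℝ) →ₗ[ℝ] ℝ :=
  LinearMap.mk₂ ℝ B hB.1 hB.2.1 hB.add_right hB.smul_right

def IsSymmBilin.toCLM (hB : IsSymmBilin B) : (ι → ℝ) →L[ℝ] (ι → ℝ) →L[ℝ] ℝ :=
  LinearMap.toContinuousLinearMap (LinearMap.toContinuousLinearMap.toLinearMap ∘ₗ hB.toBilin)

theorem IsSymmBilin.abs_le (hB : IsSymmBilin B) (x y : ι → ℝ) :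
    |B x y| ≤ ‖hB.toCLM‖ * ‖x‖ * ‖y‖ :=
  hB.toCLM.le_opNorm₂ x y

def IsGrass.ppLin (hG : IsGrass B pp pm) : (ι → ℝ) →ₗ[ℝ] (ι → ℝ) :=
  IsLinearMap.mk' pp ⟨hG.1, hG.2.1⟩

def IsGrass.pmLin (hG : IsGrass B pp pm) : (ι → ℝ) →ₗ[ℝ] (ι → ℝ) :=
  IsLinearMap.mk' pm ⟨hG.2.2.1, hG.2.2.2.1⟩

def majorant (B : (ι → ℝ) → (ι → ℝ) → ℝ) (pp pm : (ι → ℝ) → (ι → ℝ)) (x : ι → ℝ) : ℝ :=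
  B (pp x) (pp x) - B (pm x) (pm x)

theorem majorant_pos (hB : IsSymmBilin B) (hG : IsGrass B pp pm) {x : ι → ℝ} (hx : x ≠ 0) :
    0 < majorant B pp pm x := by
  have hpos := hG.2.2.2.2.2.2.2.2.1 x
  have hneg := hG.2.2.2.2.2.2.2.2.2 x
  have h0 : B 0 0 = 0 := hB.toBilin.map_zero₂ 0
  have hpp : 0 ≤ B (pp x) (pp x) := by
    rcases eq_or_ne (pp x) 0 with h | h
    exacts [by rw [h, h0], (hpos h).le]
  have hpm : B (pm x) (pm x) ≤ 0 := by
    rcases eq_or_ne (pm x) 0 with h | h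
    exacts [by rw [h, h0], (hneg h).le]
  have : pp x ≠ 0 ∨ pm x ≠ 0 := by
    by_contra! h
    exact hx (by rw [← hG.2.2.2.2.1 x, h.1, h.2, add_zero])
  unfold majorant
  rcases this with h | h
  · linarith [hpos h]
  · linarith [hneg h]

theorem majorant_smul (hB : IsSymmBilin B) (hG : IsGrass B pp pm) (t : ℝ) (x : ι → ℝ) :
    majorant B pp pm (t • x) = t ^ 2 * majorant B pp pm x := by
  simp only [majorant, hG.2.1, hG.2.2.2.1, hB.2.1, hB.smul_right]
  ring

theorem continuous_majorant (hB : IsSymmBilin B) (hG : IsGrass B pp pm) :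
    Continuous (majorant B pp pm) := by
  have hpp := hG.ppLin.continuous_of_finiteDimensional
  have hpm := hG.pmLin.continuous_of_finiteDimensional
  exact ((hB.toCLM.continuous.comp hpp).clm_apply hpp).sub
    ((hB.toCLM.continuous.comp hpm).clm_apply hpm)

end Majorant

section ThetaTerm

variable {B : (ι → ℝ) → (ι → ℝ) → ℝ} {pp pm : (ι → ℝ) → (ι → ℝ)}

theorem eC_add (w₁ w₂ : ℂ) : eC (w₁ + w₂) = eC w₁ * eC w₂ := by
  rw [eC, eC, eC, mul_add, Complex.exp_add]

def thetaTerm (B : (ι → ℝ) → (ι → ℝ) → ℝ) (pp pm : (ι → ℝ) → (ι → ℝ)) (τ : ℂ) (ζ : ι → ℂ)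
    (x : ι → ℝ) : ℂ :=
  eC (τ * (B (pp x) (pp x) : ℂ) / 2 + (starRingEnd ℂ) τ * (B (pm x) (pm x) : ℂ) / 2
    + pairC B x ζ)

theorem theta_eq_tsum_thetaTerm (L : Submodule ℤ (ι → ℝ)) (x₀ : ι → ℝ) (τ : ℂ) (ζ : ι → ℂ) :
    theta B pp pm L x₀ τ ζ = ∑' μ : L, thetaTerm B pp pm τ ζ (x₀ + μ) :=
  rfl

theorem norm_thetaTerm (τ : ℂ) (ζ : ι → ℂ) (x : ι → ℝ) :
    ‖thetaTerm B pp pm τ ζ x‖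
      = Real.exp (-(Real.pi * τ.im * majorant B pp pm x + 2 * Real.pi * B x (imV ζ))) := by
  simp only [thetaTerm, eC, Complex.norm_exp, majorant, pairC]
  congr 1
  simp [Complex.mul_re, Complex.conj_re, Complex.conj_im]
  ring

theorem summable_thetaTerm (hB : IsSymmBilin B) (hG : IsGrass B pp pm)
    (L : Submodule ℤ (ι → ℝ)) [DiscreteTopology L] {τ : ℂ} (hτ : 0 < τ.im) (ζ : ι → ℂ)
    (x₀ : ι → ℝ) : Summable fun μ : L => thetaTerm B pp pm τ ζ (x₀ + μ) := by
  obtain ⟨c, hc, hcN⟩ :=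
    exists_pos_mul_norm_sq_le (continuous_majorant hB hG) (fun x => majorant_pos hB hG)
      (majorant_smul hB hG)
  set K := ‖hB.toCLM‖ * ‖imV ζ‖
  refine .of_norm_bounded (summable_exp_neg_sq_add_lattice L (a := Real.pi * τ.im * c)
    (by positivity) (2 * Real.pi * K) x₀) fun μ => ?_
  set x := x₀ + (μ : ι → ℝ)
  rw [norm_thetaTerm, Real.exp_le_exp]
  have hquad : Real.pi * τ.im * c * ‖x‖ ^ 2 ≤ Real.pi * τ.im * majorant B pp pm x := by
    rw [mul_assoc]
    gcongr
    exact hcN x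
  have hlin : -(K * ‖x‖) ≤ B x (imV ζ) := by
    have := (abs_le.1 (hB.abs_le x (imV ζ))).1
    linarith [mul_right_comm ‖hB.toCLM‖ ‖x‖ ‖imV ζ‖]
  nlinarith [Real.pi_pos]

theorem IsFullLattice.discreteTopology {L : Submodule ℤ (ι → ℝ)} (hL : IsFullLattice L) :
    DiscreteTopology L := by
  obtain ⟨b, rfl⟩ := hL
  infer_instance

end ThetaTerm

section Splitting

variable {B : (ι → ℝ) → (ι → ℝ) → ℝ} {pp pm pM pN : (ι → ℝ) → (ι → ℝ)}

theorem reV_mapC (p : (ι → ℝ) → (ι → ℝ)) (z : ι → ℂ) : reV (mapC p z) = p (reV z) := by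
  ext i
  simp [mapC, reV, cV]

theorem imV_mapC (p : (ι → ℝ) → (ι → ℝ)) (z : ι → ℂ) : imV (mapC p z) = p (imV z) := by
  ext i
  simp [mapC, cV, imV]

theorem IsSymmBilin.eq_add_of_orthogonal (hB : IsSymmBilin B) (hpMN : ∀ x, pM x + pN x = x)
    (hpMorth : ∀ x y, B (pM x) (pN y) = 0) (x y : ι → ℝ) :
    B x y = B (pM x) (pM y) + B (pN x) (pN y) := by
  conv_lhs => rw [← hpMN x, ← hpMN y]
  rw [hB.1, hB.add_right, hB.add_right, hpMorth, hB.2.2 (pN x), hpMorth]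
  ring

theorem map_complement_comm {p : (ι → ℝ) →ₗ[ℝ] (ι → ℝ)} (hpMN : ∀ x, pM x + pN x = x)
    (hcomm : ∀ x, p (pM x) = pM (p x)) (x : ι → ℝ) : p (pN x) = pN (p x) := by
  have hN : ∀ y, pN y = y - pM y := fun y => eq_sub_of_add_eq' (hpMN y)
  rw [hN, map_sub, hcomm, hN]

theorem pairC_eq_add (hB : IsSymmBilin B) (hpMN : ∀ x, pM x + pN x = x)
    (hpMorth : ∀ x y, B (pM x) (pN y) = 0) (x : ι → ℝ) (ζ : ι → ℂ) :
    pairC B x ζ = pairC B (pM x) (mapC pM ζ) + pairC B (pN x) (mapC pN ζ) := by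
  simp only [pairC, reV_mapC, imV_mapC, hB.eq_add_of_orthogonal hpMN hpMorth x]
  push_cast
  ring

theorem thetaTerm_eq_mul (hB : IsSymmBilin B) (hG : IsGrass B pp pm)
    (hpMN : ∀ x, pM x + pN x = x) (hpMorth : ∀ x y, B (pM x) (pN y) = 0)
    (hadapt_p : ∀ x, pp (pM x) = pM (pp x)) (hadapt_m : ∀ x, pm (pM x) = pM (pm x))
    (τ : ℂ) (ζ : ι → ℂ) (x : ι → ℝ) :
    thetaTerm B pp pm τ ζ x
      = thetaTerm B pp pm τ (mapC pM ζ) (pM x) * thetaTerm B pp pm τ (mapC pN ζ) (pN x) := by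
  have hp : pp (pN x) = pN (pp x) := map_complement_comm (p := hG.ppLin) hpMN hadapt_p x
  have hm : pm (pN x) = pN (pm x) := map_complement_comm (p := hG.pmLin) hpMN hadapt_m x
  simp only [thetaTerm, ← eC_add]
  rw [hB.eq_add_of_orthogonal hpMN hpMorth (pp x), hB.eq_add_of_orthogonal hpMN hpMorth (pm x),
    pairC_eq_add hB hpMN hpMorth x ζ, hadapt_p, hadapt_m, hp, hm]
  congr 1
  push_cast
  ring

theorem tsum_add_eq_of_sub_mem {G α : Type*} [AddCommGroup G] [AddCommMonoid α]
    [TopologicalSpace α] (M : Submodule ℤ G) (f : G → α) {x y : G} (h : x - y ∈ M) :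
    ∑' m : M, f (x + m) = ∑' m : M, f (y + m) := by
  refine (tsum_congr fun m => ?_).trans
    ((Equiv.addLeft (⟨x - y, h⟩ : M)).tsum_eq fun m => f (y + m))
  simp only [Equiv.coe_addLeft, Submodule.coe_add]
  abel_nf

theorem tsum_thetaTerm_add_eq (hB : IsSymmBilin B) (hG : IsGrass B pp pm)
    {M : Submodule ℤ (ι → ℝ)} (hpM_add : ∀ x y, pM (x + y) = pM x + pM y)
    (hpM_id : ∀ m ∈ M, pM m = m) (hpMN : ∀ x, pM x + pN x = x)
    (hpMorth : ∀ x y, B (pM x) (pN y) = 0)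
    (hadapt_p : ∀ x, pp (pM x) = pM (pp x)) (hadapt_m : ∀ x, pm (pM x) = pM (pm x))
    {r y : ι → ℝ} (hy : pM r - y ∈ M) (τ : ℂ) (ζ : ι → ℂ) :
    ∑' m : M, thetaTerm B pp pm τ ζ (r + m)
      = theta B pp pm M y τ (mapC pM ζ) * thetaTerm B pp pm τ (mapC pN ζ) (pN r) := by
  have hpN_add : ∀ m : M, pN (r + m) = pN r := fun m => by
    rw [← add_left_cancel_iff (a := pM (r + m)), hpMN, hpM_add, hpM_id m m.2, add_right_comm,
      hpMN]
  simp_rw [thetaTerm_eq_mul hB hG hpMN hpMorth hadapt_p hadapt_m τ ζ, hpN_add, hpM_add,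
    fun m : M => hpM_id m m.2]
  rw [tsum_mul_right, theta_eq_tsum_thetaTerm,
    tsum_add_eq_of_sub_mem M (thetaTerm B pp pm τ (mapC pM ζ)) hy]

end Splitting

section Cosets

variable {L M : Submodule ℤ (ι → ℝ)} {S : Set (ι → ℝ)}

theorem qRep_mem (q : DiscT L S) : qRep q ∈ S :=
  (Quotient.out (s := cosetSetoid L S) q).2

theorem mkD_qRep (q : DiscT L S) : mkD (qRep q) (qRep_mem q) = q :=
  Quotient.out_eq (s := cosetSetoid L S) q

theorem mkD_eq_iff {x : ι → ℝ} {hx : x ∈ S} {q : DiscT L S} : mkD x hx = q ↔ x - qRep q ∈ L := by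
  conv_lhs => rw [← mkD_qRep q]
  exact Quotient.eq (r := cosetSetoid L S)

theorem sub_qRep_mkD_mem (x : ι → ℝ) (hx : x ∈ S) : x - qRep (mkD (L := L) x hx) ∈ L :=
  mkD_eq_iff.1 rfl

theorem eq_of_qRep_sub_mem {q₁ q₂ : DiscT L S} (h : qRep q₁ - qRep q₂ ∈ L) : q₁ = q₂ := by
  rw [← mkD_qRep q₁]
  exact mkD_eq_iff.2 h

def cosetProdEquiv (hML : M ≤ L) {x₀ : ι → ℝ} (hS : ∀ μ ∈ L, x₀ + μ ∈ S) :
    {q : DiscT M S // qRep q - x₀ ∈ L} × M ≃ L :=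
  Equiv.ofBijective (fun p => ⟨qRep p.1.1 - x₀ + p.2, L.add_mem p.1.2 (hML p.2.2)⟩) <| by
    constructor
    · rintro ⟨⟨q₁, h₁⟩, m₁⟩ ⟨⟨q₂, h₂⟩, m₂⟩ h
      have hv : qRep q₁ - x₀ + m₁ = qRep q₂ - x₀ + m₂ := congrArg Subtype.val h
      have hq : qRep q₁ - qRep q₂ ∈ M := by
        rw [show qRep q₁ - qRep q₂ = m₂ - m₁ by linear_combination hv]
        exact M.sub_mem m₂.2 m₁.2
      obtain rfl := eq_of_qRep_sub_mem hq
      obtain rfl : m₁ = m₂ := Subtype.ext (by linear_combination hv)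
      rfl
    · intro μ
      set q : DiscT M S := mkD (x₀ + μ) (hS μ μ.2)
      have hq : x₀ + μ - qRep q ∈ M := sub_qRep_mkD_mem _ _
      refine ⟨⟨⟨q, ?_⟩, ⟨x₀ + μ - qRep q, hq⟩⟩, Subtype.ext ?_⟩
      · rw [show qRep q - x₀ = μ - (x₀ + μ - qRep q) by abel]
        exact L.sub_mem μ.2 (hML hq)
      · simp

theorem coe_cosetProdEquiv (hML : M ≤ L) {x₀ : ι → ℝ} (hS : ∀ μ ∈ L, x₀ + μ ∈ S)
    (p : {q : DiscT M S // qRep q - x₀ ∈ L} × M) :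
    (cosetProdEquiv hML hS p : ι → ℝ) = qRep p.1.1 - x₀ + p.2 :=
  rfl

theorem hasSum_tsum_cosets {α : Type*} [NormedAddCommGroup α] [CompleteSpace α] (hML : M ≤ L)
    {x₀ : ι → ℝ} (hS : ∀ μ ∈ L, x₀ + μ ∈ S) {f : (ι → ℝ) → α}
    (hf : Summable fun μ : L => f (x₀ + μ)) :
    HasSum ({q : DiscT M S | qRep q - x₀ ∈ L}.indicator fun q => ∑' m : M, f (qRep q + m))
      (∑' μ : L, f (x₀ + μ)) := by
  set e := cosetProdEquiv hML hS
  have he : ∀ p, x₀ + (e p : ι → ℝ) = qRep p.1.1 + p.2 := fun p => by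
    rw [coe_cosetProdEquiv]
    abel
  have hsum : Summable fun p => f (x₀ + e p) := e.summable_iff.2 hf
  rw [← hasSum_subtype_iff_indicator, ← e.tsum_eq]
  simp only [he] at hsum ⊢
  exact hsum.hasSum.prod_fiberwise fun q => (hsum.prod_factor q).hasSum

end Cosets

theorem tsum_comp_mul_eq_tsum_fiberwise {α β 𝕜 : Type*} [NormedField 𝕜] [CompleteSpace 𝕜]
    {D : α → β} {h : β → 𝕜} {g : α → 𝕜} (hs : Summable fun a => h (D a) * g a) :
    ∑' a, h (D a) * g a = ∑' b, h b * ∑' a, {a | D a = b}.indicator g a := by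
  rw [← (hs.hasSum.tsum_fiberwise D).tsum_eq]
  refine tsum_congr fun b => ?_
  rw [← tsum_subtype, ← tsum_mul_left]
  exact tsum_congr fun a => by rw [show D a = b from a.2]

section Sublattice

/-- The dual lattice `M* = {x ∈ M_ℝ : B(x, M) ⊆ ℤ}` of a nondegenerate sublattice
`M`, inside the subspace `M_ℝ` spanned by `M`. -/
def MdualSet (B : (ι → ℝ) → (ι → ℝ) → ℝ) (M : Submodule ℤ (ι → ℝ)) :
    Set (ι → ℝ) :=
  {x | x ∈ Submodule.span ℝ (M : Set (ι → ℝ)) ∧ ∀ m ∈ M, ∃ n : ℤ, B x m = (n : ℝ)}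

/-- The theta kernel `Θ_{L,M; γ, δ}(τ, η; u^⊥)`: the sum over the cosets
`λ ∈ L*/M` with `λ + L = γ` and `π_M(λ) = δ` of
`e(τ λ_{u⊥₊}²/2 + τ̄ λ_{u⊥₋}²/2 + B(λ_{M_ℝ^⊥}, η))`. -/
def ThetaLM (B : (ι → ℝ) → (ι → ℝ) → ℝ) (pp pm pM pN : (ι → ℝ) → (ι → ℝ))
    (L M : Submodule ℤ (ι → ℝ))
    (γ : Disc B L) (δ : DiscT M (MdualSet B M)) (τ : ℂ) (η : ι → ℂ) : ℂ :=
  ∑' q : DiscT M (dualSet B L),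
    Set.indicator
      {q' : DiscT M (dualSet B L) |
        qRep q' - qRep γ ∈ L ∧ pM (qRep q') - qRep δ ∈ M}
      (fun q' => eC (τ * (B (pp (pN (qRep q'))) (pp (pN (qRep q'))) : ℂ) / 2
        + (starRingEnd ℂ) τ * (B (pm (pN (qRep q'))) (pm (pN (qRep q'))) : ℂ) / 2
        + pairC B (pN (qRep q')) η)) q

variable {B : (ι → ℝ) → (ι → ℝ) → ℝ} {L M : Submodule ℤ (ι → ℝ)} {pM pN : (ι → ℝ) → (ι → ℝ)}

theorem add_mem_dualSet (hB : IsSymmBilin B) (hE : IsEvenLat B L) {x μ : ι → ℝ}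
    (hx : x ∈ dualSet B L) (hμ : μ ∈ L) : x + μ ∈ dualSet B L := fun m hm => by
  obtain ⟨n₁, h₁⟩ := hx m hm
  obtain ⟨n₂, h₂⟩ := hE.1 μ hμ m hm
  exact ⟨n₁ + n₂, by rw [hB.1, h₁, h₂]; push_cast; ring⟩

theorem mem_MdualSet_of_mem_dualSet (hB : IsSymmBilin B) (hML : M ≤ L)
    (hpMN : ∀ x, pM x + pN x = x) (hpM_mem : ∀ x, pM x ∈ Submodule.span ℝ (M : Set (ι → ℝ)))
    (hpM_id : ∀ m ∈ M, pM m = m) (hpMorth : ∀ x y, B (pM x) (pN y) = 0) {x : ι → ℝ}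
    (hx : x ∈ dualSet B L) : pM x ∈ MdualSet B M := by
  refine ⟨hpM_mem x, fun m hm => ?_⟩
  have hN : B (pN x) m = 0 := by rw [hB.2.2, ← hpM_id m hm, hpMorth]
  have hsplit := hB.1 (pM x) (pN x) m
  rw [hpMN, hN, add_zero] at hsplit
  exact hsplit ▸ hx m (hML hm)

theorem ThetaLM_eq_tsum_indicator {pp pm : (ι → ℝ) → (ι → ℝ)} (γ : Disc B L)
    (δ : DiscT M (MdualSet B M)) (πM : DiscT M (dualSet B L) → DiscT M (MdualSet B M))
    (hπM : ∀ q, πM q = δ ↔ pM (qRep q) - qRep δ ∈ M) (τ : ℂ) (η : ι → ℂ) :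
    ThetaLM B pp pm pM pN L M γ δ τ η
      = ∑' q, {q | πM q = δ}.indicator ({q | qRep q - qRep γ ∈ L}.indicator
          fun q => thetaTerm B pp pm τ η (pN (qRep q))) q := by
  rw [ThetaLM, Set.indicator_indicator]
  congr! 3 with q
  exact Set.ext fun q => and_comm.trans (and_congr_left' (hπM q).symm)

theorem statement_14_general (B : (ι → ℝ) → (ι → ℝ) → ℝ) (pp pm : (ι → ℝ) → (ι → ℝ))
    (L : Submodule ℤ (ι → ℝ))
    (hB : IsSymmBilin B) (hG : IsGrass B pp pm)
    (hL : IsFullLattice L) (hE : IsEvenLat B L)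
    (M : Submodule ℤ (ι → ℝ)) (hML : M ≤ L)
    (pM pN : (ι → ℝ) → (ι → ℝ))
    (hpM_add : ∀ x y, pM (x + y) = pM x + pM y)
    (hpMN : ∀ x, pM x + pN x = x)
    (hpM_mem : ∀ x, pM x ∈ Submodule.span ℝ (M : Set (ι → ℝ)))
    (hpM_id : ∀ x ∈ Submodule.span ℝ (M : Set (ι → ℝ)), pM x = x)
    (hpMorth : ∀ x y, B (pM x) (pN y) = 0)
    (hadapt_p : ∀ x, pp (pM x) = pM (pp x))
    (hadapt_m : ∀ x, pm (pM x) = pM (pm x))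
    (lam0 : ι → ℝ) (hlam0 : lam0 ∈ dualSet B L)
    (τ : ℂ) (hτ : 0 < τ.im) (ζ : ι → ℂ) :
    theta B pp pm L lam0 τ ζ
      = ∑' δ : DiscT M (MdualSet B M),
          theta B pp pm M (qRep δ) τ (mapC pM ζ)
            * ThetaLM B pp pm pM pN L M (mkD lam0 hlam0) δ τ (mapC pN ζ) := by
  have := hL.discreteTopology
  have hpM_M : ∀ m ∈ M, pM m = m := fun m hm => hpM_id m (Submodule.subset_span hm)
  set γ : Disc B L := mkD lam0 hlam0
  set πM : DiscT M (dualSet B L) → DiscT M (MdualSet B M) := fun q =>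
    mkD _ (mem_MdualSet_of_mem_dualSet hB hML hpMN hpM_mem hpM_M hpMorth (qRep_mem q))
  set S₁ := {q : DiscT M (dualSet B L) | qRep q - qRep γ ∈ L}
  set g := fun q : DiscT M (dualSet B L) => thetaTerm B pp pm τ (mapC pN ζ) (pN (qRep q))
  have hcosets := hasSum_tsum_cosets hML (fun μ hμ => add_mem_dualSet hB hE (qRep_mem γ) hμ)
    (summable_thetaTerm hB hG L hτ ζ (qRep γ))
  have hsummand : ∀ q, S₁.indicator (fun q => ∑' m : M, thetaTerm B pp pm τ ζ (qRep q + m)) q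
      = theta B pp pm M (qRep (πM q)) τ (mapC pM ζ) * S₁.indicator g q := fun q => by
    by_cases hq : q ∈ S₁
    · simp only [Set.indicator_of_mem hq, g]
      exact tsum_thetaTerm_add_eq hB hG hpM_add hpM_M hpMN hpMorth hadapt_p hadapt_m
        (sub_qRep_mkD_mem _ _) τ ζ
    · simp [Set.indicator_of_notMem hq]
  rw [theta_eq_tsum_thetaTerm, tsum_add_eq_of_sub_mem L _ (sub_qRep_mkD_mem lam0 hlam0),
    ← hcosets.tsum_eq, tsum_congr hsummand, tsum_comp_mul_eq_tsum_fiberwise (D := πM)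
      (h := fun δ => theta B pp pm M (qRep δ) τ (mapC pM ζ)) (hcosets.summable.congr hsummand)]
  exact tsum_congr fun δ => by rw [ThetaLM_eq_tsum_indicator γ δ πM fun q => mkD_eq_iff]

/-- Theorem modThetaLM, splitting identity: for a primitive
nondegenerate sublattice `M ⊆ L` with `v` adapted to `V = M_ℝ ⊕ M_ℝ^⊥`, one has
`θ_{λ₀+L}(τ,ζ;v) = Σ_{δ ∈ D_M} θ^M_δ(τ, ζ_{M_ℂ}; u) · Θ_{L,M; λ₀+L, δ}(τ, ζ_{M_ℂ^⊥}; u^⊥)`. -/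
theorem statement_14 (B : (ι → ℝ) → (ι → ℝ) → ℝ) (pp pm : (ι → ℝ) → (ι → ℝ))
    (L : Submodule ℤ (ι → ℝ))
    (hB : IsSymmBilin B) (hBnd : Nondeg B) (hG : IsGrass B pp pm)
    (hL : IsFullLattice L) (hE : IsEvenLat B L)
    (M : Submodule ℤ (ι → ℝ)) (hML : M ≤ L)
    (hMprim : ∀ x ∈ L, x ∈ Submodule.span ℝ (M : Set (ι → ℝ)) → x ∈ M)
    (hMnd : ∀ x ∈ Submodule.span ℝ (M : Set (ι → ℝ)),
      (∀ y ∈ Submodule.span ℝ (M : Set (ι → ℝ)), B x y = 0) → x = 0)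
    (pM pN : (ι → ℝ) → (ι → ℝ))
    (hpM_add : ∀ x y, pM (x + y) = pM x + pM y)
    (hpM_smul : ∀ (c : ℝ) (x), pM (c • x) = c • pM x)
    (hpMN : ∀ x, pM x + pN x = x)
    (hpM_mem : ∀ x, pM x ∈ Submodule.span ℝ (M : Set (ι → ℝ)))
    (hpM_id : ∀ x ∈ Submodule.span ℝ (M : Set (ι → ℝ)), pM x = x)
    (hpMorth : ∀ x y, B (pM x) (pN y) = 0)
    (hadapt_p : ∀ x, pp (pM x) = pM (pp x))
    (hadapt_m : ∀ x, pm (pM x) = pM (pm x))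
    (lam0 : ι → ℝ) (hlam0 : lam0 ∈ dualSet B L)
    (τ : ℂ) (hτ : 0 < τ.im) (ζ : ι → ℂ) :
    theta B pp pm L lam0 τ ζ
      = ∑' δ : DiscT M (MdualSet B M),
          theta B pp pm M (qRep δ) τ (mapC pM ζ)
            * ThetaLM B pp pm pM pN L M (mkD lam0 hlam0) δ τ (mapC pN ζ) :=
  statement_14_general B pp pm L hB hG hL hE M hML pM pN hpM_add hpMN hpM_mem hpM_id hpMorth
    hadapt_p hadapt_m lam0 hlam0 τ hτ ζ

end Sublattice

end JacobiIndef
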